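/- arXiv:2001.05176 — 2 statements merged into one kernel-verified Lean document; each statement's English description precedes it below -/
import Mathlib

section
/- Let f(x) = α Σ_{κ=0}^{m-1} ζ(κ) x^κ e^{-(β-δ)x} for x ≥ 0 be the shadowed-Rician density with integer m ≥ 1, where α = (2bm/(2bm+Ω))^m/(2b), β = 1/(2b), δ = Ω/((2b)(2bm+Ω)), ζ(κ) = (-1)^κ (1-m)_κ δ^κ/(κ!)², with b, Ω > 0. Then ∫₀^∞ f(x) dx = 1. -/
/-!
Write `n = m - 1` and `λ = β - δ`. Since `(-1)^κ (1-m)_κ = n!/(n-κ)! = κ! C(n,κ)` and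
`∫₀^∞ x^κ e^{-λx} dx = κ!/λ^{κ+1}`, the integral equals
`α Σ_κ C(n,κ) δ^κ / λ^{κ+1} = α (δ + λ)^n / λ^{n+1} = α β^n / λ^{n+1}` by the binomial theorem.
With `c = 2bm/(2bm+Ω)` one has `λ = βc` and `α = c^m β`, so this is `1`.
-/

open Real MeasureTheory Set Finset
open scoped Nat

lemma integral_pow_mul_exp_neg_mul_Ioi (k : ℕ) {c : ℝ} (hc : 0 < c) :
    ∫ x in Ioi (0 : ℝ), x ^ k * exp (-(c * x)) = k ! / c ^ (k + 1) := by
  have h := integral_rpow_mul_exp_neg_mul_Ioi (a := (k : ℝ) + 1) (by positivity) hc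
  simp_rw [add_sub_cancel_right, rpow_natCast] at h
  rw [h, Gamma_nat_eq_factorial, ← Nat.cast_succ, rpow_natCast, one_div, inv_pow, inv_mul_eq_div]

lemma integrableOn_pow_mul_exp_neg_mul_Ioi (k : ℕ) {c : ℝ} (hc : 0 < c) :
    IntegrableOn (fun x : ℝ => x ^ k * exp (-(c * x))) (Ioi 0) :=
  .of_integral_ne_zero (by rw [integral_pow_mul_exp_neg_mul_Ioi k hc]; positivity)

lemma integral_sum_mul_pow_mul_exp_neg_mul_Ioi (s : Finset ℕ) (a : ℕ → ℝ) {c : ℝ}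
    (hc : 0 < c) :
    ∫ x in Ioi (0 : ℝ), ∑ k ∈ s, a k * x ^ k * exp (-(c * x))
      = ∑ k ∈ s, a k * (k ! / c ^ (k + 1)) := by
  simp_rw [mul_assoc]
  rw [integral_finsetSum _ fun k _ => (integrableOn_pow_mul_exp_neg_mul_Ioi k hc).const_mul _]
  simp_rw [integral_const_mul, integral_pow_mul_exp_neg_mul_Ioi _ hc]

lemma neg_one_pow_mul_ascPochhammer_eval_neg_natCast (R : Type*) [CommRing R] (n k : ℕ) :
    (-1) ^ k * (ascPochhammer R k).eval (-(n : R)) = n.descFactorial k := by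
  rw [ascPochhammer_eval_neg_eq_descPochhammer, descPochhammer_eval_eq_descFactorial, ← mul_assoc,
    ← mul_pow, neg_one_mul, neg_neg, one_pow, one_mul]

lemma sum_range_choose_mul_pow_div_pow_succ {K : Type*} [Field K] (n : ℕ) (d l : K)
    (hl : l ≠ 0) :
    ∑ k ∈ range (n + 1), n.choose k * d ^ k / l ^ (k + 1) = (d + l) ^ n / l ^ (n + 1) := by
  rw [add_pow, sum_div]
  refine sum_congr rfl fun k hk => ?_
  have hsplit : l ^ (n + 1) = l ^ (k + 1) * l ^ (n - k) := by
    rw [← pow_add]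
    congr 1
    have := mem_range.mp hk
    omega
  rw [hsplit]
  field_simp

theorem shadowed_rician_density_integrates_to_one
    (b Omg : ℝ) (hb : 0 < b) (hOmg : 0 < Omg) (m : ℕ) (hm : 1 ≤ m)
    (α β δ : ℝ) (ζ : ℕ → ℝ)
    (hα : α = (2 * b * m / (2 * b * m + Omg)) ^ m / (2 * b))
    (hβ : β = 1 / (2 * b))
    (hδ : δ = Omg / ((2 * b) * (2 * b * m + Omg)))
    (hζ : ∀ κ, ζ κ = (-1) ^ κ * (ascPochhammer ℝ κ).eval (1 - (m : ℝ)) * δ ^ κ /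
        ((Nat.factorial κ : ℝ)) ^ 2) :
    ∫ x in Set.Ioi (0 : ℝ),
        α * ∑ κ ∈ Finset.range m, ζ κ * x ^ κ * Real.exp (-(β - δ) * x) = 1 := by
  obtain ⟨n, rfl⟩ : ∃ n, m = n + 1 := ⟨m - 1, by omega⟩
  set c : ℝ := 2 * b * ((n + 1 : ℕ) : ℝ) / (2 * b * ((n + 1 : ℕ) : ℝ) + Omg) with hc_def
  have hc : 0 < c := by positivity
  have hβpos : 0 < β := by rw [hβ]; positivity
  have hl : β - δ = β * c := by
    rw [hβ, hδ, hc_def]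
    field_simp
    ring
  have hα' : α = c ^ (n + 1) * β := by
    rw [hα, hβ]
    ring
  have hlpos : 0 < β - δ := hl ▸ mul_pos hβpos hc
  have hcoef (κ : ℕ) :
      ζ κ * (κ ! / (β - δ) ^ (κ + 1)) = n.choose κ * δ ^ κ / (β - δ) ^ (κ + 1) := by
    have hpoch :
        (-1) ^ κ * (ascPochhammer ℝ κ).eval (1 - ((n + 1 : ℕ) : ℝ)) = κ ! * n.choose κ := by
      rw [show 1 - ((n + 1 : ℕ) : ℝ) = -(n : ℝ) by push_cast; ring,
        neg_one_pow_mul_ascPochhammer_eval_neg_natCast, Nat.descFactorial_eq_factorial_mul_choose]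
      push_cast
      ring
    rw [hζ, hpoch]
    field_simp
  simp_rw [neg_mul]
  rw [integral_const_mul, integral_sum_mul_pow_mul_exp_neg_mul_Ioi _ _ hlpos,
    sum_congr rfl fun κ _ => hcoef κ, sum_range_choose_mul_pow_div_pow_succ _ _ _ hlpos.ne',
    add_sub_cancel, hα', hl]
  field_simp
  ring
end

section
/- For β > δ ≥ 0, integer m ≥ 1, and ζ(κ) = (-1)^κ (1-m)_κ δ^κ/(κ!)², the cumulative distribution function of the density f(x) = α Σ_{κ=0}^{m-1} ζ(κ) x^κ e^{-(β-δ)x} satisfies F(t) = 1 - α Σ_{l=0}^{m-1} ζ(l) Σ_{p=0}^{l} (l!/p!) (β-δ)^{-(l+1-p)} t^p e^{-(β-δ)t} for all t ≥ 0. -/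
/-!
The antiderivative of `x ^ n * exp (-c * x)` is `-G n`, where `G n = expPolyPrimitive c n` is
the incomplete-gamma sum `∑_{p ≤ n} n!/p! · c^{-(n+1-p)} · x^p · exp (-c x)`; its derivative
is checked by induction on `n` through the recursion
`G (n+1) = (n+1)/c · G n + c⁻¹ · x^(n+1) · exp (-c x)`. Evaluating at `0` gives
`∫₀ᵗ x^n e^{-cx} = n!/c^(n+1) - G n t`, and the constants `n!/c^(n+1)` weighted by `α ζ n`
sum to `1` by the normalisation of the density.
-/

open Real Finset Nat

noncomputable def expPolyPrimitive (c : ℝ) (n : ℕ) (y : ℝ) : ℝ :=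
  ∑ p ∈ range (n + 1),
    ((n ! : ℝ) / (p ! : ℝ)) * c ^ (-(n + 1 - p : ℤ)) * y ^ p * exp (-c * y)

lemma expPolyPrimitive_zero (c y : ℝ) : expPolyPrimitive c 0 y = c⁻¹ * exp (-c * y) := by
  simp [expPolyPrimitive]

lemma expPolyPrimitive_succ {c : ℝ} (hc : c ≠ 0) (n : ℕ) (y : ℝ) :
    expPolyPrimitive c (n + 1) y =
      (n + 1) / c * expPolyPrimitive c n y + c⁻¹ * (y ^ (n + 1) * exp (-c * y)) := by
  rw [expPolyPrimitive, sum_range_succ, expPolyPrimitive, mul_sum]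
  congr 1
  · refine sum_congr rfl fun p _ => ?_
    have hzpow : c ^ (-(((n + 1 : ℕ) : ℤ) + 1 - p)) = c ^ (-((n : ℤ) + 1 - p)) * c⁻¹ := by
      rw [← zpow_neg_one c, ← zpow_add₀ hc]
      congr 1
      push_cast
      ring
    rw [hzpow, Nat.factorial_succ]
    push_cast
    field_simp
  · have hzpow : c ^ (-(((n + 1 : ℕ) : ℤ) + 1 - ((n + 1 : ℕ) : ℤ))) = c⁻¹ := by
      simp
    rw [hzpow, div_self (by positivity)]
    ring

lemma expPolyPrimitive_apply_zero (c : ℝ) (n : ℕ) :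
    expPolyPrimitive c n 0 = (n ! : ℝ) / c ^ (n + 1) := by
  rw [expPolyPrimitive, sum_eq_single_of_mem 0 (by simp) fun p _ hp => by simp [hp]]
  rw [show (-((n : ℤ) + 1 - ((0 : ℕ) : ℤ))) = -((n + 1 : ℕ) : ℤ) by push_cast; ring,
    zpow_neg, zpow_natCast]
  simp [div_eq_mul_inv]

lemma hasDerivAt_exp_neg_mul (c x : ℝ) :
    HasDerivAt (fun y => exp (-c * y)) (-c * exp (-c * x)) x := by
  simpa [mul_comm] using ((hasDerivAt_id x).const_mul (-c)).exp

theorem hasDerivAt_expPolyPrimitive {c : ℝ} (hc : c ≠ 0) (n : ℕ) (x : ℝ) :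
    HasDerivAt (expPolyPrimitive c n) (-(x ^ n * exp (-c * x))) x := by
  induction n with
  | zero =>
    simp_rw [funext (expPolyPrimitive_zero c)]
    refine ((hasDerivAt_exp_neg_mul c x).const_mul c⁻¹).congr_deriv ?_
    field_simp
  | succ n ih =>
    simp_rw [funext (expPolyPrimitive_succ hc n)]
    have hmonomial := (hasDerivAt_pow (n + 1) x).mul (hasDerivAt_exp_neg_mul c x)
    refine ((ih.const_mul ((n + 1) / c)).add (hmonomial.const_mul c⁻¹)).congr_deriv ?_
    push_cast
    field_simp
    ring

theorem integral_pow_mul_exp_neg_mul {c : ℝ} (hc : c ≠ 0) (n : ℕ) (t : ℝ) :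
    ∫ x in (0 : ℝ)..t, x ^ n * exp (-c * x) =
      (n ! : ℝ) / c ^ (n + 1) - expPolyPrimitive c n t := by
  have hint : ∫ x in (0 : ℝ)..t, -(x ^ n * exp (-c * x)) =
      expPolyPrimitive c n t - expPolyPrimitive c n 0 :=
    intervalIntegral.integral_eq_sub_of_hasDerivAt
      (fun x _ => hasDerivAt_expPolyPrimitive hc n x)
      ((by fun_prop : Continuous _).intervalIntegrable _ _)
  rw [intervalIntegral.integral_neg, expPolyPrimitive_apply_zero] at hint
  linarith

theorem integral_sum_pow_mul_exp_neg_mul {c : ℝ} (hc : c ≠ 0) (s : Finset ℕ) (a : ℕ → ℝ)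
    (t : ℝ) :
    ∫ x in (0 : ℝ)..t, ∑ κ ∈ s, a κ * x ^ κ * exp (-c * x) =
      ∑ κ ∈ s, a κ * ((κ ! : ℝ) / c ^ (κ + 1)) - ∑ κ ∈ s, a κ * expPolyPrimitive c κ t := by
  rw [intervalIntegral.integral_finsetSum
    fun κ _ => (by fun_prop : Continuous _).intervalIntegrable _ _, ← sum_sub_distrib]
  refine sum_congr rfl fun κ _ => ?_
  simp_rw [mul_assoc]
  rw [intervalIntegral.integral_const_mul, integral_pow_mul_exp_neg_mul hc, mul_sub]

theorem shadowed_rician_cdf_closed_form_general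
    (β δ α : ℝ) (hβδ : δ < β)
    (m : ℕ) (ζ : ℕ → ℝ)
    (hnorm : α * ∑ l ∈ Finset.range m,
        ζ l * (Nat.factorial l : ℝ) / (β - δ) ^ (l + 1) = 1) :
    ∀ t : ℝ, 0 ≤ t →
      ∫ x in (0 : ℝ)..t, α * ∑ κ ∈ Finset.range m, ζ κ * x ^ κ * Real.exp (-(β - δ) * x) =
        1 - α * ∑ l ∈ Finset.range m, ζ l *
          ∑ p ∈ Finset.range (l + 1),
            ((Nat.factorial l : ℝ) / (Nat.factorial p : ℝ)) *
              (β - δ) ^ (-(l + 1 - p : ℤ)) * t ^ p * Real.exp (-(β - δ) * t) := by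
  intro t _
  simp_rw [mul_div_assoc] at hnorm
  rw [intervalIntegral.integral_const_mul,
    integral_sum_pow_mul_exp_neg_mul (sub_pos.mpr hβδ).ne', mul_sub, hnorm]
  rfl

theorem shadowed_rician_cdf_closed_form
    (β δ α : ℝ) (hβδ : δ < β) (hδ : 0 ≤ δ) (hα : 0 < α)
    (m : ℕ) (hm : 1 ≤ m) (ζ : ℕ → ℝ)
    (hζ : ∀ κ, ζ κ = (-1) ^ κ * (ascPochhammer ℝ κ).eval (1 - (m : ℝ)) * δ ^ κ /
        ((Nat.factorial κ : ℝ)) ^ 2)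
    (hnorm : α * ∑ l ∈ Finset.range m,
        ζ l * (Nat.factorial l : ℝ) / (β - δ) ^ (l + 1) = 1) :
    ∀ t : ℝ, 0 ≤ t →
      ∫ x in (0 : ℝ)..t, α * ∑ κ ∈ Finset.range m, ζ κ * x ^ κ * Real.exp (-(β - δ) * x) =
        1 - α * ∑ l ∈ Finset.range m, ζ l *
          ∑ p ∈ Finset.range (l + 1),
            ((Nat.factorial l : ℝ) / (Nat.factorial p : ℝ)) *
              (β - δ) ^ (-(l + 1 - p : ℤ)) * t ^ p * Real.exp (-(β - δ) * t) :=
  shadowed_rician_cdf_closed_form_general β δ α hβδ m ζ hnorm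
end
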